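/- Let G = (V,E) be a finite simple graph, let R be a commutative ring, let v : E → R be edge weights, let q ∈ R, and let i, j ∈ V with i ≠ j. Then Z_G(q, v) = Σ_{W ⊆ V, i ∈ W, j ∉ W} [ q - 1 + ∏_{e ∈ E(W,j)} (1 + v_e) ] · C_{G[W]}(v) · Z_{G[V∖W]}(q, v), where E(W,j) denotes the set of edges of G with one endpoint in W and the other endpoint equal to j. -/

import Mathlib

/-!
Group the edge sets `A ⊆ E` by `W(A)`, the set of vertices joined to `i` by edges of `A` not
incident to `j` (`componentAvoiding i j A`). Then `i ∈ W(A)`, `j ∉ W(A)`, and `A` is the disjoint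
union of a connected spanning edge set `A₁` of `G[W]`, a set `B ⊆ E(W,j)` and an edge set `A₂` of
`G[V ∖ W]`; conversely every such triple has `W(A₁ ∪ B ∪ A₂) = W`. The components of `(V, A)` are
those of `(V ∖ W, A₂)`, except that `W` is glued to the component of `j` when `B ≠ ∅` and forms
one more component when `B = ∅`. So the weight of `A` factors as
`∏_{A₁} v · (q if B = ∅ else ∏_B v) · q^{k(A₂)} ∏_{A₂} v`, and the sum over `B` is
`q - 1 + ∏_{E(W,j)} (1 + v_e)`.
-/

open Finset SimpleGraph

/-- The number of connected components of the graph on the vertex set `W`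
with edge set `A` (isolated vertices count as components). -/
noncomputable def kcomp {V : Type*} [Fintype V] [DecidableEq V]
    (W : Finset V) (A : Finset (Sym2 V)) : ℕ :=
  Nat.card ((SimpleGraph.fromEdgeSet (A : Set (Sym2 V))).induce (W : Set V)).ConnectedComponent

/-- The edges of `G` with both endpoints in `W`, i.e. the edges of the
induced subgraph `G[W]`. -/
def edgesWithin {V : Type*} [Fintype V] [DecidableEq V]
    (G : SimpleGraph V) [DecidableRel G.Adj] (W : Finset V) : Finset (Sym2 V) :=
  G.edgeFinset.filter (fun e => ∀ x ∈ e, x ∈ W)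

/-- The multivariate Tutte polynomial of the induced subgraph `G[W]`:
`Z_{G[W]}(q,v) = Σ_{A ⊆ E(G[W])} q^{k(A)} ∏_{e ∈ A} v_e`. -/
noncomputable def Zmv {V : Type*} [Fintype V] [DecidableEq V] {R : Type*} [CommRing R]
    (G : SimpleGraph V) [DecidableRel G.Adj] (W : Finset V) (q : R) (v : Sym2 V → R) : R :=
  ∑ A ∈ (edgesWithin G W).powerset, q ^ kcomp W A * ∏ e ∈ A, v e

/-- `Ẑ_{G[W]}(q,v) = Σ_{A ⊆ E(G[W])} q^{k(A)-1} ∏_{e ∈ A} v_e`. -/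
noncomputable def ZhatMv {V : Type*} [Fintype V] [DecidableEq V] {R : Type*} [CommRing R]
    (G : SimpleGraph V) [DecidableRel G.Adj] (W : Finset V) (q : R) (v : Sym2 V → R) : R :=
  ∑ A ∈ (edgesWithin G W).powerset, q ^ (kcomp W A - 1) * ∏ e ∈ A, v e

/-- The generating polynomial of connected spanning subgraphs of `G[W]`:
`C_{G[W]}(v) = Σ_{A ⊆ E(G[W]) : k(A)=1} ∏_{e ∈ A} v_e`. -/
noncomputable def Cmv {V : Type*} [Fintype V] [DecidableEq V] {R : Type*} [CommRing R]
    (G : SimpleGraph V) [DecidableRel G.Adj] (W : Finset V) (v : Sym2 V → R) : R :=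
  ∑ A ∈ (edgesWithin G W).powerset.filter (fun A => kcomp W A = 1), ∏ e ∈ A, v e

/-- The edges of `G` with one endpoint in `W` and the other endpoint equal to `j`. -/
def edgesTo {V : Type*} [Fintype V] [DecidableEq V]
    (G : SimpleGraph V) [DecidableRel G.Adj] (W : Finset V) (j : V) : Finset (Sym2 V) :=
  G.edgeFinset.filter (fun e => ∃ x ∈ W, e = s(x, j))

namespace SimpleGraph

variable {α : Type*} {H : SimpleGraph α}

theorem Reachable.apply_eq_of_forall_adj {β : Sort*} {f : α → β}
    (hf : ∀ a b, H.Adj a b → f a = f b) {a b : α} (h : H.Reachable a b) : f a = f b := by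
  obtain ⟨p⟩ := h
  induction p with
  | nil => rfl
  | cons hadj _ ih => exact (hf _ _ hadj).trans ih

theorem Reachable.mem_of_forall_adj {S : Set α} (hS : ∀ a b, H.Adj a b → a ∈ S → b ∈ S)
    {a b : α} (h : H.Reachable a b) (ha : a ∈ S) : b ∈ S :=
  h.apply_eq_of_forall_adj (f := (· ∈ S))
    (fun a b hab => propext ⟨hS a b hab, hS b a hab.symm⟩) ▸ ha

theorem natCard_connectedComponent_eq_one_iff :
    Nat.card H.ConnectedComponent = 1 ↔ H.Connected := by
  rw [Nat.card_eq_one_iff_unique, connected_iff]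
  refine and_congr ⟨fun _ u v => ConnectedComponent.exact (Subsingleton.elim _ _),
    Preconnected.subsingleton_connectedComponent⟩
    ⟨fun ⟨c⟩ => ?_, fun ⟨v⟩ => ⟨H.connectedComponentMk v⟩⟩
  induction c using ConnectedComponent.ind with
  | h v => exact ⟨v⟩

theorem natCard_connectedComponent_eq_of_fibers {τ : Type*} (f : α → τ)
    (hsurj : Function.Surjective f) (hadj : ∀ a b, H.Adj a b → f a = f b)
    (hreach : ∀ a b, f a = f b → H.Reachable a b) :
    Nat.card H.ConnectedComponent = Nat.card τ := by
  refine Nat.card_congr (Equiv.ofBijective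
    (ConnectedComponent.lift f fun a b p _ => p.reachable.apply_eq_of_forall_adj hadj)
    ⟨fun c d => ?_, fun t => ?_⟩)
  · induction c, d using ConnectedComponent.ind₂ with
    | h a b => simpa using hreach a b
  · obtain ⟨a, rfl⟩ := hsurj t
    exact ⟨_, ConnectedComponent.lift_mk⟩

variable {S : Set α}

theorem natCard_connectedComponent_eq_induce_compl_add_one [Finite α] (hne : S.Nonempty)
    (hpre : ∀ x ∈ S, ∀ y ∈ S, H.Reachable x y) (hclosed : ∀ x ∈ S, ∀ y, H.Adj x y → y ∈ S) :
    Nat.card H.ConnectedComponent = Nat.card (H.induce Sᶜ).ConnectedComponent + 1 := by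
  classical
  set K := H.induce Sᶜ
  rw [← Finite.card_option]
  refine natCard_connectedComponent_eq_of_fibers
    (fun x => if hx : x ∈ S then none else some (K.connectedComponentMk ⟨x, hx⟩)) ?_ ?_ ?_
  · rintro (_ | c)
    · obtain ⟨x, hx⟩ := hne
      exact ⟨x, dif_pos hx⟩
    · induction c using ConnectedComponent.ind with
      | h y => exact ⟨y, dif_neg y.2⟩
  · intro a b hab
    by_cases ha : a ∈ S
    · simp [ha, hclosed a ha b hab]
    · have hb : b ∉ S := fun hb => ha (hclosed b hb a hab.symm)
      simpa [ha, hb] using ConnectedComponent.connectedComponentMk_eq_of_adj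
        (G := K) (v := ⟨a, ha⟩) (w := ⟨b, hb⟩) hab
  · intro a b h
    split_ifs at h with ha hb hb
    · exact hpre a ha b hb
    · exact (ConnectedComponent.exact (Option.some_injective _ h)).map (Embedding.induce _).toHom

theorem natCard_connectedComponent_eq_induce_compl {j : α} (hj : j ∉ S)
    (hpre : ∀ x ∈ S, ∀ y ∈ S, H.Reachable x y) (hjoin : ∃ x ∈ S, H.Adj x j)
    (hleave : ∀ x ∈ S, ∀ y ∉ S, H.Adj x y → y = j) :
    Nat.card H.ConnectedComponent = Nat.card (H.induce Sᶜ).ConnectedComponent := by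
  classical
  set K := H.induce Sᶜ
  let r : α → (Sᶜ : Set α) := fun x => if hx : x ∈ S then ⟨j, hj⟩ else ⟨x, hx⟩
  have hr : ∀ x, H.Reachable x (r x) := by
    intro x
    by_cases hx : x ∈ S
    · obtain ⟨y, hy, hyj⟩ := hjoin
      simpa [r, hx] using (hpre x hx y hy).trans hyj.reachable
    · simp [r, hx]
  refine natCard_connectedComponent_eq_of_fibers (fun x => K.connectedComponentMk (r x)) ?_ ?_ ?_
  · intro c
    induction c using ConnectedComponent.ind with
    | h y => exact ⟨y, congrArg _ (dif_neg y.2)⟩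
  · intro a b hab
    by_cases ha : a ∈ S <;> by_cases hb : b ∈ S
    · simp [r, ha, hb]
    · obtain rfl := hleave a ha b hb hab
      simp [r, ha, hb]
    · obtain rfl := hleave b hb a ha hab.symm
      simp [r, ha, hb]
    · simpa [r, ha, hb] using ConnectedComponent.connectedComponentMk_eq_of_adj
        (G := K) (v := ⟨a, ha⟩) (w := ⟨b, hb⟩) hab
  · intro a b h
    exact (hr a).trans (((ConnectedComponent.exact h).map (Embedding.induce _).toHom).trans
      (hr b).symm)

end SimpleGraph

theorem Finset.sum_powerset_union {ι M : Type*} [DecidableEq ι] [AddCommMonoid M]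
    {s t : Finset ι} (h : Disjoint s t) (f : Finset ι → M) :
    ∑ A ∈ (s ∪ t).powerset, f A = ∑ A ∈ s.powerset, ∑ B ∈ t.powerset, f (A ∪ B) := by
  induction t using Finset.induction_on generalizing f with
  | empty => simp
  | insert a t ha ih =>
    have hs : Disjoint s t := h.mono_right (subset_insert a t)
    have has : a ∉ s := fun has => disjoint_left.1 h has (mem_insert_self a t)
    rw [union_insert, sum_powerset_insert (by simp [has, ha]), ih hs, ih hs]
    simp_rw [sum_powerset_insert ha, union_insert, sum_add_distrib]

theorem sum_powerset_ite_empty {ι R : Type*} [DecidableEq ι] [CommRing R] (s : Finset ι)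
    (q : R) (v : ι → R) :
    ∑ B ∈ s.powerset, (if B = ∅ then q else ∏ e ∈ B, v e) = q - 1 + ∏ e ∈ s, (1 + v e) := by
  have hsplit : ∀ B : Finset ι, (if B = ∅ then q else ∏ e ∈ B, v e) =
      ∏ e ∈ B, v e + if B = ∅ then q - 1 else 0 := by
    intro B
    split_ifs with hB
    · simp [hB]
    · simp
  simp_rw [hsplit, sum_add_distrib, sum_ite_eq' _ _ (fun _ => q - 1), prod_one_add]
  simp [add_comm]

section EdgeSets

variable {V : Type*} [Fintype V] [DecidableEq V]

theorem kcomp_univ (A : Finset (Sym2 V)) :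
    kcomp univ A = Nat.card (fromEdgeSet (A : Set (Sym2 V))).ConnectedComponent := by
  rw [kcomp, coe_univ]
  exact Nat.card_congr (induceUnivIso _).connectedComponentEquiv

theorem kcomp_congr {W : Finset V} {A B : Finset (Sym2 V)}
    (h : ∀ x ∈ W, ∀ y ∈ W, x ≠ y → (s(x, y) ∈ A ↔ s(x, y) ∈ B)) : kcomp W A = kcomp W B := by
  unfold kcomp
  congr 2
  ext ⟨x, hx⟩ ⟨y, hy⟩
  simp only [comap_adj, Function.Embedding.subtype_apply, fromEdgeSet_adj, mem_coe]
  exact ⟨fun ⟨hA, hne⟩ => ⟨(h x hx y hy hne).1 hA, hne⟩,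
    fun ⟨hB, hne⟩ => ⟨(h x hx y hy hne).2 hB, hne⟩⟩

theorem kcomp_eq_one_iff {W : Finset V} {A : Finset (Sym2 V)} :
    kcomp W A = 1 ↔ ((fromEdgeSet (A : Set (Sym2 V))).induce (W : Set V)).Connected :=
  natCard_connectedComponent_eq_one_iff

theorem reachable_of_kcomp_eq_one {W : Finset V} {A : Finset (Sym2 V)} (h : kcomp W A = 1)
    {x y : V} (hx : x ∈ W) (hy : y ∈ W) : (fromEdgeSet (A : Set (Sym2 V))).Reachable x y :=
  ((kcomp_eq_one_iff.1 h).preconnected ⟨x, hx⟩ ⟨y, hy⟩).map (Embedding.induce _).toHom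

variable {G : SimpleGraph V} [DecidableRel G.Adj] {W : Finset V} {j x y : V}

theorem mem_edgesWithin : s(x, y) ∈ edgesWithin G W ↔ G.Adj x y ∧ x ∈ W ∧ y ∈ W := by
  simp [edgesWithin]

theorem mem_edgesTo :
    s(x, y) ∈ edgesTo G W j ↔ G.Adj x y ∧ (x ∈ W ∧ y = j ∨ y ∈ W ∧ x = j) := by
  simp only [edgesTo, mem_filter, mem_edgeFinset, mem_edgeSet, Sym2.eq_iff]
  grind

theorem edgesWithin_univ : edgesWithin G univ = G.edgeFinset := by
  simp [edgesWithin]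

theorem disjoint_edgesWithin_edgesTo (hj : j ∉ W) :
    Disjoint (edgesWithin G W) (edgesTo G W j) := by
  refine disjoint_left.2 fun e => ?_
  induction e using Sym2.ind with
  | h x y =>
    rw [mem_edgesWithin, mem_edgesTo]
    rintro ⟨-, hx, hy⟩ ⟨-, ⟨-, rfl⟩ | ⟨-, rfl⟩⟩ <;> contradiction

theorem disjoint_edgesWithin_sdiff :
    Disjoint (edgesWithin G W) (edgesWithin G (univ \ W)) := by
  refine disjoint_left.2 fun e => ?_
  induction e using Sym2.ind with
  | h x y =>
    rw [mem_edgesWithin, mem_edgesWithin, mem_sdiff]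
    rintro ⟨-, hx, -⟩ ⟨-, ⟨-, hx'⟩, -⟩
    exact hx' hx

theorem disjoint_edgesTo_edgesWithin_sdiff :
    Disjoint (edgesTo G W j) (edgesWithin G (univ \ W)) := by
  refine disjoint_left.2 fun e => ?_
  induction e using Sym2.ind with
  | h x y =>
    rw [mem_edgesTo, mem_edgesWithin, mem_sdiff, mem_sdiff]
    rintro ⟨-, ⟨hx, -⟩ | ⟨hy, -⟩⟩ ⟨-, ⟨-, hx'⟩, -, hy'⟩
    exacts [hx' hx, hy' hy]

variable {i : V} {A₁ B A₂ : Finset (Sym2 V)}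

theorem kcomp_sdiff_union_union (hA₁ : A₁ ⊆ edgesWithin G W) (hB : B ⊆ edgesTo G W j) :
    kcomp (univ \ W) (A₁ ∪ B ∪ A₂) = kcomp (univ \ W) A₂ := by
  refine kcomp_congr fun x hx y hy _ => ⟨fun h => ?_, mem_union_right _⟩
  simp only [mem_sdiff, mem_univ, true_and] at hx hy
  rcases mem_union.1 h with h | h
  · rcases mem_union.1 h with h | h
    · exact absurd (mem_edgesWithin.1 (hA₁ h)).2.1 hx
    · rcases (mem_edgesTo.1 (hB h)).2 with ⟨hx', -⟩ | ⟨hy', -⟩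
      exacts [absurd hx' hx, absurd hy' hy]
  · exact h

theorem kcomp_union_union (hi : i ∈ W) (hj : j ∉ W) (hA₁ : A₁ ⊆ edgesWithin G W)
    (hB : B ⊆ edgesTo G W j) (hA₂ : A₂ ⊆ edgesWithin G (univ \ W)) (hk : kcomp W A₁ = 1) :
    kcomp univ (A₁ ∪ B ∪ A₂) = kcomp (univ \ W) A₂ + if B = ∅ then 1 else 0 := by
  have hleave : ∀ x y, s(x, y) ∈ A₁ ∪ B ∪ A₂ → x ∈ W → y ∉ W → s(x, y) ∈ B ∧ y = j := by
    intro x y h hx hy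
    have h₁ : s(x, y) ∈ A₁ → y ∈ W := fun h => (mem_edgesWithin.1 (hA₁ h)).2.2
    have h₂ : s(x, y) ∈ B → x ∈ W ∧ y = j ∨ y ∈ W ∧ x = j := fun h => (mem_edgesTo.1 (hB h)).2
    have h₃ : s(x, y) ∈ A₂ → x ∉ W := fun h => by
      simpa using (mem_edgesWithin.1 (hA₂ h)).2.1
    simp only [mem_union] at h
    tauto
  set H := fromEdgeSet ((A₁ ∪ B ∪ A₂ : Finset (Sym2 V)) : Set (Sym2 V))
  have hpre : ∀ x ∈ (W : Set V), ∀ y ∈ (W : Set V), H.Reachable x y := fun x hx y hy =>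
    (reachable_of_kcomp_eq_one hk hx hy).mono
      (fromEdgeSet_mono (coe_subset.2 (subset_union_left.trans subset_union_left)))
  rw [kcomp_univ, ← kcomp_sdiff_union_union hA₁ hB, kcomp, coe_sdiff, coe_univ,
    ← Set.compl_eq_univ_sdiff]
  split_ifs with hB₀
  · refine natCard_connectedComponent_eq_induce_compl_add_one ⟨i, hi⟩ hpre fun x hx y hxy => ?_
    by_contra hy
    simpa [hB₀] using (hleave x y ((fromEdgeSet_adj _).1 hxy).1 hx hy).1
  · obtain ⟨⟨x, y⟩, he⟩ := nonempty_iff_ne_empty.2 hB₀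
    refine natCard_connectedComponent_eq_induce_compl hj hpre ?_
      fun x hx y hy hxy => (hleave x y ((fromEdgeSet_adj _).1 hxy).1 hx hy).2
    have heU : s(x, y) ∈ A₁ ∪ B ∪ A₂ := mem_union_left _ (mem_union_right _ he)
    rcases (mem_edgesTo.1 (hB he)).2 with ⟨hx, rfl⟩ | ⟨hy, rfl⟩
    · exact ⟨x, hx, (fromEdgeSet_adj _).2 ⟨heU, ne_of_mem_of_not_mem hx hj⟩⟩
    · exact ⟨y, hy, (fromEdgeSet_adj _).2 ⟨Sym2.eq_swap ▸ heU, ne_of_mem_of_not_mem hy hj⟩⟩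

theorem union_union_inter_edgesWithin (hj : j ∉ W) (hA₁ : A₁ ⊆ edgesWithin G W)
    (hB : B ⊆ edgesTo G W j) (hA₂ : A₂ ⊆ edgesWithin G (univ \ W)) :
    (A₁ ∪ B ∪ A₂) ∩ edgesWithin G W = A₁ := by
  rw [union_inter_distrib_right, union_inter_distrib_right, inter_eq_left.2 hA₁,
    disjoint_iff_inter_eq_empty.1 ((disjoint_edgesWithin_edgesTo hj).mono_right hB).symm,
    disjoint_iff_inter_eq_empty.1 (disjoint_edgesWithin_sdiff.mono_right hA₂).symm,
    union_empty, union_empty]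

theorem pow_kcomp_mul_prod_union_union {R : Type*} [CommRing R] (q : R) (v : Sym2 V → R)
    (hi : i ∈ W) (hj : j ∉ W) (hA₁ : A₁ ⊆ edgesWithin G W) (hB : B ⊆ edgesTo G W j)
    (hA₂ : A₂ ⊆ edgesWithin G (univ \ W)) (hk : kcomp W A₁ = 1) :
    q ^ kcomp univ (A₁ ∪ B ∪ A₂) * ∏ e ∈ A₁ ∪ B ∪ A₂, v e =
      (∏ e ∈ A₁, v e) *
        ((if B = ∅ then q else ∏ e ∈ B, v e) * (q ^ kcomp (univ \ W) A₂ * ∏ e ∈ A₂, v e)) := by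
  rw [kcomp_union_union hi hj hA₁ hB hA₂ hk,
    prod_union (disjoint_union_left.2 ⟨disjoint_edgesWithin_sdiff.mono hA₁ hA₂,
      disjoint_edgesTo_edgesWithin_sdiff.mono hB hA₂⟩),
    prod_union ((disjoint_edgesWithin_edgesTo hj).mono hA₁ hB)]
  split_ifs with hB₀
  · subst hB₀
    simp only [prod_empty, pow_succ]
    ring
  · ring

end EdgeSets

section ComponentAvoiding

variable {V : Type*} [Fintype V] [DecidableEq V] {G : SimpleGraph V} [DecidableRel G.Adj]
  {i j : V} {A : Finset (Sym2 V)} {W : Finset V}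

noncomputable def componentAvoiding (i j : V) (A : Finset (Sym2 V)) : Finset V := by
  classical
  exact univ.filter fun x => (fromEdgeSet (A.filter (j ∉ ·) : Set (Sym2 V))).Reachable i x

theorem mem_componentAvoiding {x : V} :
    x ∈ componentAvoiding i j A ↔
      (fromEdgeSet (A.filter (j ∉ ·) : Set (Sym2 V))).Reachable i x := by
  simp [componentAvoiding]

theorem coe_componentAvoiding :
    (componentAvoiding i j A : Set V) =
      ((fromEdgeSet (A.filter (j ∉ ·) : Set (Sym2 V))).connectedComponentMk i).supp := by
  ext x
  simp [mem_componentAvoiding, reachable_comm]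

theorem self_mem_componentAvoiding : i ∈ componentAvoiding i j A :=
  mem_componentAvoiding.2 (Reachable.refl i)

theorem notMem_componentAvoiding (hij : i ≠ j) : j ∉ componentAvoiding i j A := fun h =>
  (mem_componentAvoiding.1 h).mem_of_forall_adj (S := {x | x ≠ j})
    (fun a b hab _ hb => by simp_all) hij rfl

theorem subset_edgesWithin_union_edgesTo_union (hA : A ⊆ G.edgeFinset)
    (hj : j ∉ componentAvoiding i j A) :
    A ⊆ edgesWithin G (componentAvoiding i j A) ∪ edgesTo G (componentAvoiding i j A) j ∪
      edgesWithin G (univ \ componentAvoiding i j A) := by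
  set W := componentAvoiding i j A
  have hclosed : ∀ {a b}, s(a, b) ∈ A → a ∈ W → a ≠ j → b ≠ j → b ∈ W := by
    intro a b hab ha haj hbj
    have hAdj : (fromEdgeSet (A.filter (j ∉ ·) : Set (Sym2 V))).Adj a b :=
      (fromEdgeSet_adj _).2
        ⟨by simp [hab, haj.symm, hbj.symm], (mem_edgeFinset.1 (hA hab) : G.Adj a b).ne⟩
    exact mem_componentAvoiding.2 ((mem_componentAvoiding.1 ha).trans hAdj.reachable)
  intro e
  induction e using Sym2.ind with
  | h x y =>
    intro he
    have hxW := hclosed he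
    have hyW := hclosed (Sym2.eq_swap ▸ he)
    have hxj : x ∈ W → x ≠ j := fun hx => ne_of_mem_of_not_mem hx hj
    have hyj : y ∈ W → y ≠ j := fun hy => ne_of_mem_of_not_mem hy hj
    have hxy : G.Adj x y := mem_edgeFinset.1 (hA he)
    simp only [mem_union, mem_edgesWithin, mem_edgesTo, mem_sdiff, mem_univ, true_and]
    tauto

theorem kcomp_inter_edgesWithin_componentAvoiding (hA : A ⊆ G.edgeFinset)
    (hj : j ∉ componentAvoiding i j A) :
    kcomp (componentAvoiding i j A) (A ∩ edgesWithin G (componentAvoiding i j A)) = 1 := by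
  rw [kcomp_congr (B := A.filter (j ∉ ·)), kcomp_eq_one_iff, coe_componentAvoiding]
  · exact ConnectedComponent.connected_toSimpleGraph _
  · intro x hx y hy _
    have hxj := ne_of_mem_of_not_mem hx hj
    have hyj := ne_of_mem_of_not_mem hy hj
    rw [mem_inter, mem_edgesWithin, mem_filter, Sym2.mem_iff]
    exact ⟨fun h => ⟨h.1, by rintro (rfl | rfl) <;> contradiction⟩,
      fun h => ⟨h.1, mem_edgeFinset.1 (hA h.1), hx, hy⟩⟩

theorem componentAvoiding_eq_of_subset (hi : i ∈ W) (hj : j ∉ W)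
    (hsub : A ⊆ edgesWithin G W ∪ edgesTo G W j ∪ edgesWithin G (univ \ W))
    (hk : kcomp W (A ∩ edgesWithin G W) = 1) : componentAvoiding i j A = W := by
  ext x
  rw [mem_componentAvoiding]
  constructor
  · refine fun h => h.mem_of_forall_adj (S := W) (fun a b hab ha => ?_) hi
    obtain ⟨hmem, -⟩ := (fromEdgeSet_adj _).1 hab
    rw [mem_coe, mem_filter, Sym2.mem_iff] at hmem
    have := hsub hmem.1
    simp only [mem_union, mem_edgesWithin, mem_edgesTo, mem_sdiff, mem_univ, true_and] at this
    grind
  · refine fun hx => (reachable_of_kcomp_eq_one hk hi hx).mono (fromEdgeSet_mono ?_)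
    intro e he
    rw [mem_coe, mem_inter] at he
    exact mem_filter.2 ⟨he.1, fun hje => hj ((mem_filter.1 he.2).2 j hje)⟩

theorem componentAvoiding_eq_iff (hA : A ⊆ G.edgeFinset) (hi : i ∈ W) (hj : j ∉ W) :
    componentAvoiding i j A = W ↔
      A ⊆ edgesWithin G W ∪ edgesTo G W j ∪ edgesWithin G (univ \ W) ∧
        kcomp W (A ∩ edgesWithin G W) = 1 := by
  refine ⟨?_, fun h => componentAvoiding_eq_of_subset hi hj h.1 h.2⟩
  rintro rfl
  exact ⟨subset_edgesWithin_union_edgesTo_union hA hj,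
    kcomp_inter_edgesWithin_componentAvoiding hA hj⟩

theorem filter_componentAvoiding_eq (hi : i ∈ W) (hj : j ∉ W) :
    {A ∈ G.edgeFinset.powerset | componentAvoiding i j A = W} =
      {A ∈ (edgesWithin G W ∪ edgesTo G W j ∪ edgesWithin G (univ \ W)).powerset |
        kcomp W (A ∩ edgesWithin G W) = 1} := by
  have hE : edgesWithin G W ∪ edgesTo G W j ∪ edgesWithin G (univ \ W) ⊆ G.edgeFinset :=
    union_subset (union_subset (filter_subset _ _) (filter_subset _ _)) (filter_subset _ _)
  ext A
  simp only [mem_filter, mem_powerset]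
  constructor
  · rintro ⟨hA, h⟩
    exact (componentAvoiding_eq_iff hA hi hj).1 h
  · rintro ⟨hA, hk⟩
    exact ⟨hA.trans hE, (componentAvoiding_eq_iff (hA.trans hE) hi hj).2 ⟨hA, hk⟩⟩

end ComponentAvoiding

section Sums

variable {V : Type*} [Fintype V] [DecidableEq V] {R : Type*} [CommRing R]
  {G : SimpleGraph V} [DecidableRel G.Adj] {i j : V} {W : Finset V}

theorem sum_filter_componentAvoiding_eq (hi : i ∈ W) (hj : j ∉ W) (q : R) (v : Sym2 V → R) :
    ∑ A ∈ G.edgeFinset.powerset with componentAvoiding i j A = W,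
        q ^ kcomp univ A * ∏ e ∈ A, v e =
      (q - 1 + ∏ e ∈ edgesTo G W j, (1 + v e)) * Cmv G W v * Zmv G (univ \ W) q v := by
  rw [filter_componentAvoiding_eq hi hj, sum_filter,
    sum_powerset_union (disjoint_union_left.2
      ⟨disjoint_edgesWithin_sdiff, disjoint_edgesTo_edgesWithin_sdiff⟩),
    sum_powerset_union (disjoint_edgesWithin_edgesTo hj)]
  calc _ = ∑ A₁ ∈ (edgesWithin G W).powerset, ∑ B ∈ (edgesTo G W j).powerset,
          ∑ A₂ ∈ (edgesWithin G (univ \ W)).powerset,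
            (if kcomp W A₁ = 1 then ∏ e ∈ A₁, v e else 0) *
              ((if B = ∅ then q else ∏ e ∈ B, v e) *
                (q ^ kcomp (univ \ W) A₂ * ∏ e ∈ A₂, v e)) := by
        refine sum_congr rfl fun A₁ hA₁ => sum_congr rfl fun B hB => sum_congr rfl fun A₂ hA₂ => ?_
        rw [mem_powerset] at hA₁ hB hA₂
        rw [union_union_inter_edgesWithin hj hA₁ hB hA₂]
        by_cases hk : kcomp W A₁ = 1
        · rw [if_pos hk, if_pos hk, pow_kcomp_mul_prod_union_union q v hi hj hA₁ hB hA₂ hk]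
        · rw [if_neg hk, if_neg hk, zero_mul]
    _ = _ := by
      simp only [← mul_sum, ← sum_mul, Cmv, Zmv, ← sum_filter, sum_powerset_ite_empty]
      ring

end Sums

theorem stmt15 {V : Type*} [Fintype V] [DecidableEq V] {R : Type*} [CommRing R]
    (G : SimpleGraph V) [DecidableRel G.Adj] (v : Sym2 V → R) (q : R)
    (i j : V) (hij : i ≠ j) :
    Zmv G Finset.univ q v
      = ∑ W ∈ Finset.univ.filter (fun W : Finset V => i ∈ W ∧ j ∉ W),
          (q - 1 + ∏ e ∈ edgesTo G W j, (1 + v e)) *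
            Cmv G W v * Zmv G (Finset.univ \ W) q v := by
  have hmaps : ∀ A ∈ G.edgeFinset.powerset,
      componentAvoiding i j A ∈ univ.filter (fun W : Finset V => i ∈ W ∧ j ∉ W) := fun A _ =>
    mem_filter.2 ⟨mem_univ _, self_mem_componentAvoiding, notMem_componentAvoiding hij⟩
  rw [Zmv, edgesWithin_univ, ← sum_fiberwise_of_maps_to hmaps]
  refine sum_congr rfl fun W hW => ?_
  obtain ⟨-, hi, hj⟩ := mem_filter.1 hW
  exact sum_filter_componentAvoiding_eq hi hj q v
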